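/- For any discrete random variables A, B, C on finite spaces, |J(A; (B,C)) − J(A; C | B)| ≤ J(A; B). -/

import Mathlib

open scoped Classical BigOperators

/-- `μ` is a probability mass function on a finite type. -/
def IsPMF {Ω : Type*} [Fintype Ω] (μ : Ω → ℝ) : Prop :=
  (∀ ω, 0 ≤ μ ω) ∧ ∑ ω, μ ω = 1

/-- Probability that the random variable `X` takes the value `a` under `μ`. -/
noncomputable def pr {Ω α : Type*} [Fintype Ω] (μ : Ω → ℝ) (X : Ω → α) (a : α) : ℝ :=
  ∑ ω, if X ω = a then μ ω else 0

/-- Variational information `J(X;Y)`: total variation distance between the joint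
law of `(X,Y)` and the product of the marginal laws. -/
noncomputable def vinfo {Ω α β : Type*} [Fintype Ω] [Fintype α] [Fintype β]
    (μ : Ω → ℝ) (X : Ω → α) (Y : Ω → β) : ℝ :=
  (1/2) * ∑ a, ∑ b, |pr μ (fun ω => (X ω, Y ω)) (a, b) - pr μ X a * pr μ Y b|

/-- Conditional variational information `J(X;Y|W)`:
`E_W[d_TV(P(X,Y|W), P(X|W)⊗P(Y|W))]`. -/
noncomputable def condVinfo {Ω α β γ : Type*} [Fintype Ω] [Fintype α] [Fintype β] [Fintype γ]
    (μ : Ω → ℝ) (X : Ω → α) (Y : Ω → β) (W : Ω → γ) : ℝ :=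
  (1/2) * ∑ c, ∑ a, ∑ b,
    |pr μ (fun ω => (X ω, Y ω, W ω)) (a, b, c) -
      pr μ (fun ω => (X ω, W ω)) (a, c) * pr μ (fun ω => (Y ω, W ω)) (b, c) / pr μ W c|

/-!
Write `p(a,b,c)` for the joint law of `(A,B,C)`. Both informations are `ℓ¹` distances from `p`:
`2 J(A;(B,C)) = ‖p - P(a) P(b,c)‖₁` and `2 J(A;C|B) = ‖p - P(a,b) P(b,c) / P(b)‖₁`. By the triangle
inequality their difference is at most the distance between the two reference laws, and summing
`P(b,c)` out over `c` turns that distance into `‖P(a,b) - P(a) P(b)‖₁ = 2 J(A;B)`.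
-/

open Finset

lemma abs_sum_sub_sum_le_sum_abs_sub {ι : Type*} (s : Finset ι) (f g : ι → ℝ) :
    |(∑ i ∈ s, f i) - (∑ i ∈ s, g i)| ≤ ∑ i ∈ s, |f i - g i| := by
  rw [← sum_sub_distrib]
  exact abs_sum_le_sum_abs _ _

lemma abs_sum_abs_sub_sub_sum_abs_sub_le {ι : Type*} (s : Finset ι) (p q r : ι → ℝ) :
    |(∑ i ∈ s, |p i - q i|) - (∑ i ∈ s, |p i - r i|)| ≤ ∑ i ∈ s, |r i - q i| := by
  refine (abs_sum_sub_sum_le_sum_abs_sub _ _ _).trans (sum_le_sum fun i _ => ?_)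
  calc |(|p i - q i|) - (|p i - r i|)| ≤ |(p i - q i) - (p i - r i)| := abs_abs_sub_abs_le_abs_sub _ _
    _ = |r i - q i| := by ring_nf

/-- At `W = 0` the division is junk; the hypotheses force both sides to vanish there. -/
lemma sum_abs_mul_div_sub_mul {ι : Type*} (s : Finset ι) (w : ι → ℝ) (x y W : ℝ)
    (hw : ∀ i ∈ s, 0 ≤ w i) (hW : ∑ i ∈ s, w i = W) (hx : W = 0 → x = 0) :
    ∑ i ∈ s, |x * w i / W - y * w i| = |x - y * W| := by
  by_cases hW0 : W = 0
  · have hw0 : ∀ i ∈ s, w i = 0 := (sum_eq_zero_iff_of_nonneg hw).mp (hW.trans hW0)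
    simp +contextual [hx hW0, hW0, hw0]
  · calc ∑ i ∈ s, |x * w i / W - y * w i| = ∑ i ∈ s, w i * |x / W - y| := by
          refine sum_congr rfl fun i hi => ?_
          rw [← abs_of_nonneg (hw i hi), ← abs_mul, abs_of_nonneg (hw i hi)]
          ring_nf
      _ = |W * (x / W - y)| := by
          rw [← sum_mul, hW, abs_mul, abs_of_nonneg (hW ▸ sum_nonneg hw : 0 ≤ W)]
      _ = |x - y * W| := by
          congr 1
          field_simp

section pr

variable {Ω α β : Type*} [Fintype Ω] (μ : Ω → ℝ)

lemma pr_congr {X : Ω → α} {Y : Ω → β} {a : α} {b : β} (h : ∀ ω, X ω = a ↔ Y ω = b) :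
    pr μ X a = pr μ Y b :=
  sum_congr rfl fun ω _ => if_congr (h ω) rfl rfl

lemma sum_pr_pair_snd [Fintype β] (X : Ω → α) (Y : Ω → β) (a : α) :
    ∑ b, pr μ (fun ω => (X ω, Y ω)) (a, b) = pr μ X a := by
  unfold pr
  rw [sum_comm]
  refine sum_congr rfl fun ω _ => ?_
  by_cases h : X ω = a <;> simp [h, Prod.ext_iff]

variable {μ}

lemma pr_nonneg (hμ : ∀ ω, 0 ≤ μ ω) (X : Ω → α) (a : α) : 0 ≤ pr μ X a :=
  sum_nonneg fun ω _ => by split <;> simp [hμ ω]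

lemma pr_pair_le_pr_snd (hμ : ∀ ω, 0 ≤ μ ω) (X : Ω → α) (Y : Ω → β) (a : α) (b : β) :
    pr μ (fun ω => (X ω, Y ω)) (a, b) ≤ pr μ Y b :=
  sum_le_sum fun ω _ => by
    by_cases hY : Y ω = b <;> by_cases hX : X ω = a <;> simp [hX, hY, hμ ω]

end pr

section laws

variable {Ω α β γ : Type*} [Fintype Ω] [Fintype α] [Fintype β] [Fintype γ] (μ : Ω → ℝ)

lemma vinfo_pair_eq_sum (X : Ω → α) (Y : Ω → β) (Z : Ω → γ) :
    vinfo μ X (fun ω => (Y ω, Z ω)) = 1 / 2 * ∑ a, ∑ b, ∑ c,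
      |pr μ (fun ω => (X ω, Y ω, Z ω)) (a, b, c) -
        pr μ X a * pr μ (fun ω => (Y ω, Z ω)) (b, c)| := by
  simp only [vinfo, Fintype.sum_prod_type]

lemma condVinfo_eq_sum (X : Ω → α) (Y : Ω → β) (Z : Ω → γ) :
    condVinfo μ X Z Y = 1 / 2 * ∑ a, ∑ b, ∑ c,
      |pr μ (fun ω => (X ω, Y ω, Z ω)) (a, b, c) -
        pr μ (fun ω => (X ω, Y ω)) (a, b) * pr μ (fun ω => (Y ω, Z ω)) (b, c) / pr μ Y b| := by
  rw [condVinfo, sum_comm]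
  refine congrArg _ (sum_congr rfl fun a _ => sum_congr rfl fun b _ => sum_congr rfl fun c _ => ?_)
  have h₁ : pr μ (fun ω => (X ω, Z ω, Y ω)) (a, c, b) = pr μ (fun ω => (X ω, Y ω, Z ω)) (a, b, c) :=
    pr_congr μ fun ω => by simp only [Prod.mk.injEq]; tauto
  have h₂ : pr μ (fun ω => (Z ω, Y ω)) (c, b) = pr μ (fun ω => (Y ω, Z ω)) (b, c) :=
    pr_congr μ fun ω => by simp only [Prod.mk.injEq, and_comm]
  rw [h₁, h₂]

end laws

/-- Tightness of the chain rule: `|J(A;(B,C)) − J(A;C|B)| ≤ J(A;B)`. -/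
theorem chain_rule_tight₁ {Ω 𝒜 ℬ 𝒞 : Type*} [Fintype Ω] [Fintype 𝒜] [Fintype ℬ] [Fintype 𝒞]
    (μ : Ω → ℝ) (hμ : IsPMF μ) (A : Ω → 𝒜) (B : Ω → ℬ) (C : Ω → 𝒞) :
    |vinfo μ A (fun ω => (B ω, C ω)) - condVinfo μ A C B| ≤ vinfo μ A B := by
  rw [vinfo_pair_eq_sum, condVinfo_eq_sum, ← mul_sub, abs_mul, abs_of_pos one_half_pos, vinfo]
  gcongr 1 / 2 * ?_
  refine (abs_sum_sub_sum_le_sum_abs_sub _ _ _).trans (sum_le_sum fun a _ =>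
    (abs_sum_sub_sum_le_sum_abs_sub _ _ _).trans (sum_le_sum fun b _ => ?_))
  refine (abs_sum_abs_sub_sub_sum_abs_sub_le _ _ _ _).trans_eq
    (sum_abs_mul_div_sub_mul _ _ _ _ _ (fun c _ => pr_nonneg hμ.1 _ _)
      (sum_pr_pair_snd μ B C b) fun hB => ?_)
  exact le_antisymm (hB ▸ pr_pair_le_pr_snd hμ.1 A B a b) (pr_nonneg hμ.1 _ _)
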